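/- Let A : [0,1]² → ℝ be a continuous symmetric kernel that is positive semi-definite: ∫₀¹∫₀¹ φ(x)A(x,y)φ(y)dxdy ≥ 0 for every φ ∈ L²([0,1]). If Θ solves ∂ₛΘ(s,x) = −α∫₀¹ A(x,y)Θ(s,y)dy with α > 0, then the prediction error PE(s) := ∫₀¹∫₀¹ Θ(s,x)A(x,y)Θ(s,y)dxdy is nonincreasing in s and satisfies PE(τ) ≤ MSE(0)/(ατ) for all τ > 0, where MSE(0) = ∫₀¹ Θ(0,x)²dx. -/

import Mathlib

/-!
Write `T` for the integral operator of the kernel, so that the flow is `Θ' = -α TΘ`,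
`PE = ⟨Θ, TΘ⟩` and `MSE = ‖Θ‖²`. Since `T` is self-adjoint, `PE' = 2⟨Θ', TΘ⟩ = -2α‖TΘ‖² ≤ 0`
and `MSE' = -2α PE`. By the mean value theorem and monotonicity of `PE`,
`2ατ PE(τ) ≤ MSE(0) - MSE(τ) ≤ MSE(0)`.
-/
open MeasureTheory Set Filter Topology Function
open scoped Interval

theorem hasDerivAt_intervalIntegral_of_continuous {E : Type*} [NormedAddCommGroup E]
    [NormedSpace ℝ E] {F G : ℝ → ℝ → E} {a b t₀ : ℝ}
    (hF : ∀ t, Continuous (F t)) (hG : Continuous (uncurry G))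
    (hFG : ∀ᶠ t in 𝓝 t₀, ∀ x ∈ [[a, b]], HasDerivAt (F · x) (G t x) t) :
    HasDerivAt (fun t => ∫ x in a..b, F t x) (∫ x in a..b, G t₀ x) t₀ := by
  obtain ⟨ε, hε, hball⟩ := Metric.eventually_nhds_iff_ball.1 hFG
  obtain ⟨C, hC⟩ := ((isCompact_closedBall t₀ (ε / 2)).prod
    isCompact_uIcc).exists_bound_of_continuousOn hG.continuousOn
  have hsub : Metric.ball t₀ (ε / 2) ⊆ Metric.ball t₀ ε := Metric.ball_subset_ball (by linarith)
  refine (intervalIntegral.hasDerivAt_integral_of_dominated_loc_of_deriv_le (bound := fun _ => C)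
    (Metric.ball_mem_nhds t₀ (half_pos hε))
    (.of_forall fun t => (hF t).aestronglyMeasurable) ((hF t₀).intervalIntegrable a b)
    (hG.comp (Continuous.prodMk_right t₀)).aestronglyMeasurable
    (.of_forall fun x hx t ht => hC (t, x) ⟨Metric.ball_subset_closedBall ht, uIoc_subset_uIcc hx⟩)
    intervalIntegrable_const
    (.of_forall fun x hx t ht => hball t (hsub ht) x (uIoc_subset_uIcc hx))).2

noncomputable def kernelOp (B : ℝ → ℝ → ℝ) (f : ℝ → ℝ) (x : ℝ) : ℝ :=
  ∫ y in (0:ℝ)..1, B x y * f y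

section kernelOp

variable {B : ℝ → ℝ → ℝ}

theorem kernelOp_const_mul (c : ℝ) (f : ℝ → ℝ) (x : ℝ) :
    kernelOp B (fun y => c * f y) x = c * kernelOp B f x := by
  simp only [kernelOp, ← intervalIntegral.integral_const_mul, mul_left_comm]

theorem continuous_kernelOp_uncurry (hB : Continuous (uncurry B)) {F : ℝ → ℝ → ℝ}
    (hF : Continuous (uncurry F)) : Continuous (uncurry fun t => kernelOp B (F t)) :=
  intervalIntegral.continuous_parametric_intervalIntegral_of_continuous'
    (by fun_prop) 0 1

theorem integral_mul_kernelOp_comm (hB : Continuous (uncurry B)) (hsymm : ∀ x y, B x y = B y x)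
    {f g : ℝ → ℝ} (hf : Continuous f) (hg : Continuous g) :
    ∫ x in (0:ℝ)..1, f x * kernelOp B g x = ∫ x in (0:ℝ)..1, kernelOp B f x * g x := by
  have hint : Integrable (uncurry fun x y => f x * (B x y * g y))
      ((volume.restrict (Ioc (0:ℝ) 1)).prod (volume.restrict (Ioc (0:ℝ) 1))) := by
    rw [Measure.prod_restrict, ← Measure.volume_eq_prod]
    exact (ContinuousOn.integrableOn_compact (isCompact_Icc.prod isCompact_Icc)
      (by fun_prop)).mono_set (prod_mono Ioc_subset_Icc_self Ioc_subset_Icc_self)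
  simp only [kernelOp, intervalIntegral.integral_of_le zero_le_one, ← integral_const_mul,
    ← integral_mul_const]
  rw [integral_integral_swap hint]
  refine integral_congr_ae (.of_forall fun x => integral_congr_ae (.of_forall fun y => ?_))
  simp only [hsymm x y]
  ring

theorem hasDerivAt_kernelOp (hB : Continuous (uncurry B)) {F G : ℝ → ℝ → ℝ} {t₀ : ℝ}
    (hF : Continuous (uncurry F)) (hG : Continuous (uncurry G))
    (hFG : ∀ᶠ t in 𝓝 t₀, ∀ x ∈ Icc (0:ℝ) 1, HasDerivAt (F · x) (G t x) t) (x : ℝ) :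
    HasDerivAt (fun t => kernelOp B (F t) x) (kernelOp B (G t₀) x) t₀ :=
  hasDerivAt_intervalIntegral_of_continuous (fun t => by fun_prop) (by fun_prop)
    (hFG.mono fun t ht y hy => (ht y (by simpa using hy)).const_mul (B x y))

end kernelOp

noncomputable def meanSquaredError (f : ℝ → ℝ) : ℝ := ∫ x in (0:ℝ)..1, f x ^ 2

noncomputable def predictionError (B : ℝ → ℝ → ℝ) (f : ℝ → ℝ) : ℝ :=
  ∫ x in (0:ℝ)..1, f x * kernelOp B f x

section flow

variable {B Θ : ℝ → ℝ → ℝ} {α t₀ : ℝ}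

theorem hasDerivAt_meanSquaredError (hB : Continuous (uncurry B)) (hΘ : Continuous (uncurry Θ))
    (hODE : ∀ᶠ t in 𝓝 t₀, ∀ x ∈ Icc (0:ℝ) 1,
      HasDerivAt (Θ · x) (-α * kernelOp B (Θ t) x) t) :
    HasDerivAt (fun t => meanSquaredError (Θ t)) (-(2 * α) * predictionError B (Θ t₀)) t₀ := by
  have hK := continuous_kernelOp_uncurry hB hΘ
  have := hasDerivAt_intervalIntegral_of_continuous (a := 0) (b := 1) (F := fun t x => Θ t x ^ 2)
    (G := fun t x => -(2 * α) * (Θ t x * kernelOp B (Θ t) x)) (fun t => (hΘ.uncurry_left t).pow 2)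
    (by fun_prop) (hODE.mono fun t ht x hx =>
      ((ht x (by simpa using hx)).pow 2).congr_deriv (by push_cast; ring))
  simpa only [meanSquaredError, predictionError, intervalIntegral.integral_const_mul] using this

theorem hasDerivAt_predictionError (hB : Continuous (uncurry B))
    (hsymm : ∀ x y, B x y = B y x) (hΘ : Continuous (uncurry Θ))
    (hODE : ∀ᶠ t in 𝓝 t₀, ∀ x ∈ Icc (0:ℝ) 1,
      HasDerivAt (Θ · x) (-α * kernelOp B (Θ t) x) t) :
    HasDerivAt (fun t => predictionError B (Θ t))
      (-(2 * α) * ∫ x in (0:ℝ)..1, kernelOp B (Θ t₀) x ^ 2) t₀ := by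
  have hK := continuous_kernelOp_uncurry hB hΘ
  have hKK := continuous_kernelOp_uncurry hB hK
  have hdK : ∀ᶠ t in 𝓝 t₀, ∀ x, HasDerivAt (fun s => kernelOp B (Θ s) x)
      (-α * kernelOp B (kernelOp B (Θ t)) x) t :=
    hODE.eventually_nhds.mono fun t ht x => by
      simpa only [kernelOp_const_mul] using
        hasDerivAt_kernelOp hB hΘ (G := fun s y => -α * kernelOp B (Θ s) y) (by fun_prop) ht x
  have hderiv := hasDerivAt_intervalIntegral_of_continuous (a := 0) (b := 1)
    (F := fun t x => Θ t x * kernelOp B (Θ t) x)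
    (G := fun t x => -α * kernelOp B (Θ t) x * kernelOp B (Θ t) x
      + Θ t x * (-α * kernelOp B (kernelOp B (Θ t)) x))
    (fun t => (hΘ.uncurry_left t).mul (hK.uncurry_left t)) (by fun_prop)
    (hODE.and hdK |>.mono fun t ht x hx => (ht.1 x (by simpa using hx)).mul (ht.2 x))
  refine hderiv.congr_deriv ?_
  have hΘ₀ := hΘ.uncurry_left t₀
  have hK₀ := hK.uncurry_left t₀
  have hKK₀ := hKK.uncurry_left t₀
  rw [intervalIntegral.integral_add ((by fun_prop : Continuous _).intervalIntegrable 0 1)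
    ((by fun_prop : Continuous _).intervalIntegrable 0 1)]
  simp only [mul_assoc, mul_left_comm (Θ t₀ _), intervalIntegral.integral_const_mul,
    integral_mul_kernelOp_comm hB hsymm hΘ₀ hK₀, sq]
  ring

variable (hB : Continuous (uncurry B)) (hΘ : Continuous (uncurry Θ))
  (hODE : ∀ s, 0 < s → ∀ x ∈ Icc (0:ℝ) 1, HasDerivAt (Θ · x) (-α * kernelOp B (Θ s) x) s)
include hB hΘ hODE

theorem antitoneOn_predictionError (hsymm : ∀ x y, B x y = B y x) (hα : 0 ≤ α) :
    AntitoneOn (fun s => predictionError B (Θ s)) (Ici 0) := by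
  have hK := continuous_kernelOp_uncurry hB hΘ
  refine antitoneOn_of_hasDerivWithinAt_nonpos (convex_Ici 0)
    (f' := fun s => -(2 * α) * ∫ x in (0:ℝ)..1, kernelOp B (Θ s) x ^ 2)
    (intervalIntegral.continuous_parametric_intervalIntegral_of_continuous' (by fun_prop) 0 1
      |>.continuousOn) (fun s hs => ?_) (fun s _ => ?_)
  · rw [interior_Ici] at hs
    exact (hasDerivAt_predictionError hB hsymm hΘ
      (eventually_gt_nhds hs |>.mono hODE)).hasDerivWithinAt
  · exact mul_nonpos_of_nonpos_of_nonneg (by linarith)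
      (intervalIntegral.integral_nonneg zero_le_one fun x _ => sq_nonneg _)

theorem mul_predictionError_le_sub_meanSquaredError (hsymm : ∀ x y, B x y = B y x) (hα : 0 ≤ α)
    {τ : ℝ} (hτ : 0 < τ) :
    2 * α * τ * predictionError B (Θ τ) ≤ meanSquaredError (Θ 0) - meanSquaredError (Θ τ) := by
  obtain ⟨ξ, hξ, hslope⟩ := exists_hasDerivAt_eq_slope (fun s => meanSquaredError (Θ s)) _ hτ
    (intervalIntegral.continuous_parametric_intervalIntegral_of_continuous' (by fun_prop) 0 1
      |>.continuousOn)
    (fun s hs => hasDerivAt_meanSquaredError hB hΘ (eventually_gt_nhds hs.1 |>.mono hODE))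
  have hPE := antitoneOn_predictionError hB hΘ hODE hsymm hα hξ.1.le hτ.le hξ.2.le
  rw [sub_zero, eq_div_iff hτ.ne'] at hslope
  have := mul_le_mul_of_nonneg_left hPE (by positivity : 0 ≤ 2 * α * τ)
  linarith

end flow

noncomputable def unitSquareExtend (A : ℝ → ℝ → ℝ) (x y : ℝ) : ℝ :=
  A (projIcc 0 1 zero_le_one x) (projIcc 0 1 zero_le_one y)

theorem continuous_unitSquareExtend {A : ℝ → ℝ → ℝ}
    (hA : ContinuousOn (fun p : ℝ × ℝ => A p.1 p.2) (Icc 0 1 ×ˢ Icc 0 1)) :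
    Continuous (uncurry (unitSquareExtend A)) :=
  hA.comp_continuous (f := fun p : ℝ × ℝ =>
      ((projIcc 0 1 zero_le_one p.1 : ℝ), (projIcc 0 1 zero_le_one p.2 : ℝ)))
    (by fun_prop) fun p => ⟨Subtype.prop _, Subtype.prop _⟩

theorem intervalIntegral_mul_eq_kernelOp_unitSquareExtend (A : ℝ → ℝ → ℝ) (f : ℝ → ℝ)
    {x : ℝ} (hx : x ∈ Icc (0:ℝ) 1) :
    ∫ y in (0:ℝ)..1, A x y * f y = kernelOp (unitSquareExtend A) f x :=
  intervalIntegral.integral_congr fun y hy => by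
    rw [uIcc_of_le zero_le_one] at hy
    simp only [unitSquareExtend, projIcc_of_mem _ hx, projIcc_of_mem _ hy]

theorem stmt5_general (A Θ : ℝ → ℝ → ℝ) (α : ℝ) (hα : 0 < α)
    (hAcont : ContinuousOn (fun p : ℝ × ℝ => A p.1 p.2)
      (Set.Icc 0 1 ×ˢ Set.Icc 0 1))
    (hsymm : ∀ x y, A x y = A y x)
    (hΘcont : Continuous (fun p : ℝ × ℝ => Θ p.1 p.2))
    (hODE : ∀ s : ℝ, 0 ≤ s → ∀ x ∈ Set.Icc (0:ℝ) 1,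
      HasDerivAt (fun t => Θ t x) (-α * ∫ y in (0:ℝ)..1, A x y * Θ s y) s) :
    (∀ s₁ s₂ : ℝ, 0 ≤ s₁ → s₁ ≤ s₂ →
      (∫ x in (0:ℝ)..1, ∫ y in (0:ℝ)..1, Θ s₂ x * A x y * Θ s₂ y)
        ≤ ∫ x in (0:ℝ)..1, ∫ y in (0:ℝ)..1, Θ s₁ x * A x y * Θ s₁ y) ∧
    (∀ τ : ℝ, 0 < τ →
      (∫ x in (0:ℝ)..1, ∫ y in (0:ℝ)..1, Θ τ x * A x y * Θ τ y)
        ≤ (∫ x in (0:ℝ)..1, (Θ 0 x) ^ 2) / (α * τ)) := by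
  have hB := continuous_unitSquareExtend hAcont
  have hBsymm : ∀ x y, unitSquareExtend A x y = unitSquareExtend A y x := fun x y => hsymm _ _
  have hODE' : ∀ s, 0 < s → ∀ x ∈ Icc (0:ℝ) 1,
      HasDerivAt (Θ · x) (-α * kernelOp (unitSquareExtend A) (Θ s) x) s := fun s hs x hx => by
    simpa only [intervalIntegral_mul_eq_kernelOp_unitSquareExtend A _ hx] using hODE s hs.le x hx
  have hPE : ∀ s, (∫ x in (0:ℝ)..1, ∫ y in (0:ℝ)..1, Θ s x * A x y * Θ s y)
      = predictionError (unitSquareExtend A) (Θ s) := fun s =>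
    intervalIntegral.integral_congr fun x hx => by
      rw [uIcc_of_le zero_le_one] at hx
      simp only [mul_assoc, intervalIntegral.integral_const_mul,
        intervalIntegral_mul_eq_kernelOp_unitSquareExtend A _ hx]
  refine ⟨fun s₁ s₂ hs₁ hs₁₂ => ?_, fun τ hτ => ?_⟩
  · simpa only [hPE] using antitoneOn_predictionError hB hΘcont hODE' hBsymm hα.le
      (mem_Ici.2 hs₁) (mem_Ici.2 (hs₁.trans hs₁₂)) hs₁₂
  · have hbound := mul_predictionError_le_sub_meanSquaredError hB hΘcont hODE' hBsymm hα.le hτ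
    have hMSE : ∀ s, 0 ≤ meanSquaredError (Θ s) := fun s =>
      intervalIntegral.integral_nonneg zero_le_one fun x _ => sq_nonneg _
    rw [hPE, le_div_iff₀ (by positivity)]
    unfold meanSquaredError at hbound hMSE
    linarith [hMSE 0, hMSE τ]

/-- For a positive semi-definite continuous kernel, the prediction error of the limiting
ODE trajectory is nonincreasing and decays at rate `MSE(0)/(ατ)`. -/
theorem stmt5 (A Θ : ℝ → ℝ → ℝ) (α : ℝ) (hα : 0 < α)
    (hAcont : ContinuousOn (fun p : ℝ × ℝ => A p.1 p.2)
      (Set.Icc 0 1 ×ˢ Set.Icc 0 1))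
    (hsymm : ∀ x y, A x y = A y x)
    (hPSD : ∀ φ : ℝ → ℝ, IntegrableOn (fun x => (φ x) ^ 2) (Set.Icc 0 1) →
      0 ≤ ∫ x in (0:ℝ)..1, ∫ y in (0:ℝ)..1, φ x * A x y * φ y)
    (hΘcont : Continuous (fun p : ℝ × ℝ => Θ p.1 p.2))
    (hL2 : ∀ s : ℝ, IntervalIntegrable (fun x => (Θ s x) ^ 2) volume 0 1)
    (hODE : ∀ s : ℝ, 0 ≤ s → ∀ x ∈ Set.Icc (0:ℝ) 1,
      HasDerivAt (fun t => Θ t x) (-α * ∫ y in (0:ℝ)..1, A x y * Θ s y) s) :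
    (∀ s₁ s₂ : ℝ, 0 ≤ s₁ → s₁ ≤ s₂ →
      (∫ x in (0:ℝ)..1, ∫ y in (0:ℝ)..1, Θ s₂ x * A x y * Θ s₂ y)
        ≤ ∫ x in (0:ℝ)..1, ∫ y in (0:ℝ)..1, Θ s₁ x * A x y * Θ s₁ y) ∧
    (∀ τ : ℝ, 0 < τ →
      (∫ x in (0:ℝ)..1, ∫ y in (0:ℝ)..1, Θ τ x * A x y * Θ τ y)
        ≤ (∫ x in (0:ℝ)..1, (Θ 0 x) ^ 2) / (α * τ)) :=
  stmt5_general A Θ α hα hAcont hsymm hΘcont hODE
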